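/- Let f : ℂ² → ℂ be an entire function (differentiable over ℂ on all of ℂ²). Suppose there exist four vectors v₁, v₂, v₃, v₄ ∈ ℂ² that are linearly independent over ℝ such that f(z + vⱼ) = f(z) for all z ∈ ℂ² and all j ∈ {1,2,3,4}. Then f is constant. -/

import Mathlib

/-!
A holomorphic function periodic under a basis of the underlying real space takes on all of
space only the values it takes on the fundamental parallelepiped, which is compact. It is
therefore bounded, hence constant by Liouville's theorem.
-/

open Set Function Module Submodule

theorem Function.Periodic.of_mem_span_int {E β : Type*} [AddCommGroup E] {f : E → β}
    {ι : Type*} {v : ι → E} (hper : ∀ i, Periodic f (v i)) {c : E}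
    (hc : c ∈ span ℤ (range v)) : Periodic f c := by
  induction hc using span_induction with
  | mem c hc =>
    obtain ⟨i, rfl⟩ := hc
    exact hper i
  | zero => exact fun x => by rw [add_zero]
  | add c d _ _ hc hd => exact hc.add_period hd
  | smul n c _ hc => exact hc.zsmul n

section PeriodicBasis

variable {E β ι : Type*} [NormedAddCommGroup E] [NormedSpace ℝ E] [Fintype ι]
  {f : E → β} (b : Basis ι ℝ E)

theorem range_subset_image_fundamentalDomain_of_periodic (hper : ∀ i, Periodic f (b i)) :
    range f ⊆ f '' ZSpan.fundamentalDomain b := by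
  rintro _ ⟨x, rfl⟩
  refine ⟨ZSpan.fract b x, ZSpan.fract_mem_fundamentalDomain b x, ?_⟩
  exact (Periodic.of_mem_span_int hper (ZSpan.floor b x).2).sub_eq x

theorem isBounded_range_of_periodic [PseudoMetricSpace β] (hf : Continuous f)
    (hper : ∀ i, Periodic f (b i)) : Bornology.IsBounded (range f) := by
  have hK : IsCompact (parallelepiped b) := by
    simpa only [Basis.coe_parallelepiped] using b.parallelepiped.isCompact
  refine (hK.image hf).isBounded.subset ?_
  exact (range_subset_image_fundamentalDomain_of_periodic b hper).trans
    (image_mono (ZSpan.fundamentalDomain_subset_parallelepiped b))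

end PeriodicBasis

theorem Differentiable.apply_eq_apply_of_periodic {E F ι : Type*} [NormedAddCommGroup E]
    [NormedSpace ℂ E] [NormedAddCommGroup F] [NormedSpace ℂ F] [Fintype ι] {f : E → F}
    (hf : Differentiable ℂ f) (b : Basis ι ℝ E) (hper : ∀ i, Periodic f (b i)) (z w : E) :
    f z = f w :=
  hf.apply_eq_apply_of_bounded (isBounded_range_of_periodic b hf.continuous hper) z w

/-- A holomorphic (entire) function on ℂ² that is periodic with respect to four
vectors linearly independent over ℝ (a full real lattice) is constant. -/
theorem entire_periodic_four_real_independent_is_constant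
    (f : ℂ × ℂ → ℂ) (hf : Differentiable ℂ f)
    (v : Fin 4 → ℂ × ℂ) (hv : LinearIndependent ℝ v)
    (hper : ∀ (z : ℂ × ℂ) (j : Fin 4), f (z + v j) = f z) :
    ∀ z w : ℂ × ℂ, f z = f w := by
  have hcard : Fintype.card (Fin 4) = finrank ℝ (ℂ × ℂ) := by
    simp [finrank_prod, Complex.finrank_real_complex]
  let b : Basis (Fin 4) ℝ (ℂ × ℂ) := basisOfLinearIndependentOfCardEqFinrank hv hcard
  refine hf.apply_eq_apply_of_periodic b fun j z => ?_
  simpa only [b, coe_basisOfLinearIndependentOfCardEqFinrank] using hper z j
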